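/- arXiv:1710.09422 — 6 statements merged into one kernel-verified Lean document; each statement's English description precedes it below -/
import Mathlib

section
/- If X is a probability space with probability measure P_f having density f with respect to a σ-finite measure m, and pv_f(x) := P_f({t : f(t) ≤ f(x)}) denotes the p-value of x, then for every β ≥ 0, P_f({x : pv_f(x) ≤ β}) ≤ β. -/
open MeasureTheory ENNReal

/-- The p-value of `x` w.r.t. a probability density `f` on a measure space:
`pv_f(x) = P_f({t : f(t) ≤ f(x)}) = ∫_{f ≤ f(x)} f dm`. -/
noncomputable def pValue {X : Type*} [MeasurableSpace X] (m : Measure X)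
    (f : X → ℝ≥0∞) (x : X) : ℝ≥0∞ :=
  ∫⁻ t in {t | f t ≤ f x}, f t ∂m

/-- If `f` is a probability density w.r.t. a σ-finite measure `m` and
`pv_f(x) := P_f({t : f(t) ≤ f(x)})`, then for every `β ≥ 0`,
`P_f({x : pv_f(x) ≤ β}) ≤ β`. -/
theorem pValue_alert_prob_le {X : Type*} [MeasurableSpace X] (m : Measure X)
    [SigmaFinite m] (f : X → ℝ≥0∞) (hf : Measurable f)
    (hf1 : ∫⁻ x, f x ∂m = 1) (β : ℝ≥0∞) :
    ∫⁻ x in {x | pValue m f x ≤ β}, f x ∂m ≤ β := by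
  classical
  set g : ℝ≥0∞ → ℝ≥0∞ := fun c => ∫⁻ t in {t | f t ≤ c}, f t ∂m with hg
  set S : Set ℝ≥0∞ := {c | g c ≤ β} with hSdef
  have hmemS : ∀ x : X, pValue m f x ≤ β → f x ∈ S := fun x hx => hx
  by_cases hne : S.Nonempty
  · set s := sSup S with hs
    by_cases hmem : s ∈ S
    · calc ∫⁻ x in {x | pValue m f x ≤ β}, f x ∂m
          ≤ ∫⁻ x in {t | f t ≤ s}, f x ∂m := by
            apply lintegral_mono_set
            intro x hx
            exact le_sSup (hmemS x hx)
        _ ≤ β := hmem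
    · obtain ⟨u, hu_mono, hu_tendsto, hu_mem⟩ :=
        exists_seq_tendsto_sSup hne (OrderTop.bddAbove S)
      have hsup : (⨆ n, u n) = s :=
        tendsto_nhds_unique (tendsto_atTop_iSup hu_mono) hu_tendsto
      have hsub : {x | pValue m f x ≤ β} ⊆ ⋃ n, {t | f t ≤ u n} := by
        intro x hx
        have hxS : f x ∈ S := hmemS x hx
        have hlt : f x < s := lt_of_le_of_ne (le_sSup hxS) (fun h => hmem (h ▸ hxS))
        rw [← hsup] at hlt
        obtain ⟨n, hn⟩ := lt_iSup_iff.mp hlt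
        exact Set.mem_iUnion.mpr ⟨n, hn.le⟩
      have hBm : ∀ c : ℝ≥0∞, MeasurableSet {t | f t ≤ c} :=
        fun c => measurableSet_le hf measurable_const
      have hUnion : ∫⁻ x in ⋃ n, {t | f t ≤ u n}, f x ∂m
          = ⨆ n, ∫⁻ x in {t | f t ≤ u n}, f x ∂m := by
        rw [← withDensity_apply f (MeasurableSet.iUnion fun n => hBm (u n))]
        have hmonoB : Monotone fun n => {t | f t ≤ u n} := fun a b hab =>
          Set.setOf_subset_setOf.mpr fun t ht => le_trans ht (hu_mono hab)
        rw [hmonoB.directed_le.measure_iUnion]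
        exact iSup_congr fun n => withDensity_apply f (hBm (u n))
      calc ∫⁻ x in {x | pValue m f x ≤ β}, f x ∂m
          ≤ ∫⁻ x in ⋃ n, {t | f t ≤ u n}, f x ∂m := lintegral_mono_set hsub
        _ = ⨆ n, ∫⁻ x in {t | f t ≤ u n}, f x ∂m := hUnion
        _ ≤ β := iSup_le fun n => hu_mem n
  · have hempty : {x | pValue m f x ≤ β} = ∅ := by
      ext x
      simp only [Set.mem_setOf_eq, Set.mem_empty_iff_false, iff_false]
      exact fun hx => hne ⟨f x, hmemS x hx⟩
    rw [hempty]
    simp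
end

section
/- With pv_f the p-value of a probability density f, for every β ≥ 0 one has P_f({x : pv_f(x) > β}) ≥ 1 − β. -/
/-!
Write `ν = f • m`, so that `pv_f x = ν {t | f t ≤ f x}`. The set `A = {pv_f ≤ β}` is covered by
the sublevel sets `{f ≤ f x}`, `x ∈ A`, each of `ν`-measure `pv_f x ≤ β`. These sets are nested
and countably many of them already cover `A` (take values `f x` increasing to `sup f(A)`), so
continuity from below gives `ν A ≤ β`, and `ν Aᶜ ≥ ν univ - β = 1 - β`.
-/

open MeasureTheory ENNReal

open Set Filter Function

section CountableCofinal

variable {α : Type*} [CompleteLinearOrder α] [TopologicalSpace α] [OrderTopology α]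
  [FirstCountableTopology α]

theorem Set.exists_countable_subset_forall_le (t : Set α) :
    ∃ s ⊆ t, s.Countable ∧ ∀ x ∈ t, ∃ y ∈ s, x ≤ y := by
  by_cases hmax : sSup t ∈ t
  · exact ⟨{sSup t}, singleton_subset_iff.mpr hmax, countable_singleton _,
      fun x hx => ⟨sSup t, rfl, le_sSup hx⟩⟩
  rcases t.eq_empty_or_nonempty with rfl | ht
  · exact ⟨∅, empty_subset _, countable_empty, fun _ => False.elim⟩
  obtain ⟨u, -, -, hu, hut⟩ := (isLUB_sSup t).exists_seq_strictMono_tendsto_of_notMem hmax ht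
  refine ⟨range u, range_subset_iff.mpr hut, countable_range u, fun x hx => ?_⟩
  have hlt : x < sSup t := (le_sSup hx).lt_of_ne (ne_of_mem_of_not_mem hx hmax)
  obtain ⟨n, hn⟩ := (hu.eventually (eventually_gt_nhds hlt)).exists
  exact ⟨u n, mem_range_self n, hn.le⟩

theorem MeasureTheory.measure_le_of_forall_measure_sublevel_le {X : Type*} [MeasurableSpace X]
    (ν : Measure X) (g : X → α) {A : Set X} {β : ℝ≥0∞}
    (h : ∀ x ∈ A, ν {y | g y ≤ g x} ≤ β) : ν A ≤ β := by
  obtain ⟨s, hsA, hs, hcover⟩ := (g '' A).exists_countable_subset_forall_le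
  have hdir : DirectedOn ((· ⊆ ·) on fun c => {y | g y ≤ c}) s :=
    (Std.Total.directedOn s).mono fun _ _ hab _ hy => le_trans hy hab
  calc ν A ≤ ν (⋃ c ∈ s, {y | g y ≤ c}) := measure_mono fun x hx => by
        obtain ⟨c, hc, hxc⟩ := hcover (g x) (mem_image_of_mem g hx)
        exact mem_biUnion hc hxc
    _ = ⨆ c ∈ s, ν {y | g y ≤ c} := measure_biUnion_eq_iSup hs hdir
    _ ≤ β := iSup₂_le fun c hc => by
        obtain ⟨x, hx, rfl⟩ := hsA hc
        exact h x hx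

end CountableCofinal

theorem pValue_gt_prob_ge_general {X : Type*} [MeasurableSpace X] (m : Measure X)
    [SigmaFinite m] (f : X → ℝ≥0∞)
    (hf1 : ∫⁻ x, f x ∂m = 1) (β : ℝ≥0∞) :
    1 - β ≤ ∫⁻ x in {x | β < pValue m f x}, f x ∂m := by
  set ν := m.withDensity f
  have hpv (x : X) : pValue m f x = ν {t | f t ≤ f x} := (withDensity_apply' f _).symm
  set A := {x | pValue m f x ≤ β}
  have hA : ν A ≤ β := measure_le_of_forall_measure_sublevel_le ν f fun x hx => hpv x ▸ hx
  have hAc : {x | β < pValue m f x} = Aᶜ := by ext; simp [A]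
  rw [hAc, ← withDensity_apply', tsub_le_iff_left]
  calc 1 = ν univ := by rw [withDensity_apply', Measure.restrict_univ, hf1]
    _ ≤ ν A + ν Aᶜ := measure_univ_le_add_compl A
    _ ≤ β + ν Aᶜ := by gcongr

/-- For a probability density `f` with p-value `pv_f`, for every `β ≥ 0`,
`P_f({x : pv_f(x) > β}) ≥ 1 - β`. -/
theorem pValue_gt_prob_ge {X : Type*} [MeasurableSpace X] (m : Measure X)
    [SigmaFinite m] (f : X → ℝ≥0∞) (hf : Measurable f)
    (hf1 : ∫⁻ x, f x ∂m = 1) (β : ℝ≥0∞) :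
    1 - β ≤ ∫⁻ x in {x | β < pValue m f x}, f x ∂m :=
  pValue_gt_prob_ge_general m f hf1 β
end

section
/- If there exists y ∈ X with pv_f(y) = β, then P_f({x : pv_f(x) ≤ β}) = β, i.e., the bound P_f({pv_f ≤ β}) ≤ β is attained with equality. -/
/-!
Write `ν` for the measure with density `f`, so that `pv_f(x) = ν {f ≤ f x}` is a monotone
function of `f x`. Hence `{pv_f ≤ β}` is the preimage under `f` of a lower set `J`, and
`J` is exhausted by an increasing sequence `aₙ ∈ J` (or has a greatest element): then
`ν {pv_f ≤ β} = supₙ ν {f ≤ aₙ} ≤ β`. Conversely, if `β = pv_f(y)`, the set `{f ≤ f y}` of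
measure `β` lies inside `{pv_f ≤ β}`.
-/

open MeasureTheory ENNReal

open Set Filter

theorem exists_monotone_seq_mem_subset_iUnion_Iic {α : Type*} [ConditionallyCompleteLinearOrder α]
    [TopologicalSpace α] [OrderTopology α] [FirstCountableTopology α] {J : Set α}
    (hne : J.Nonempty) (hbdd : BddAbove J) :
    ∃ u : ℕ → α, Monotone u ∧ (∀ n, u n ∈ J) ∧ J ⊆ ⋃ n, Iic (u n) := by
  by_cases hmem : sSup J ∈ J
  · exact ⟨fun _ => sSup J, monotone_const, fun _ => hmem,
      fun a ha => mem_iUnion_of_mem 0 (le_csSup hbdd ha)⟩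
  obtain ⟨u, hu_mono, hu_tendsto, hu_mem⟩ := exists_seq_tendsto_sSup hne hbdd
  refine ⟨u, hu_mono, hu_mem, fun a ha => ?_⟩
  have ha_lt : a < sSup J := (le_csSup hbdd ha).lt_of_ne (ne_of_mem_of_not_mem ha hmem)
  obtain ⟨n, hn⟩ := (hu_tendsto.eventually_const_lt ha_lt).exists
  exact mem_iUnion_of_mem n hn.le

theorem measure_setOf_measure_le_le {X α : Type*} [MeasurableSpace X] [CompleteLinearOrder α]
    [TopologicalSpace α] [OrderTopology α] [FirstCountableTopology α]
    (ν : Measure X) (g : X → α) (β : ℝ≥0∞) :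
    ν {x | ν {t | g t ≤ g x} ≤ β} ≤ β := by
  set J : Set α := {a | ν (g ⁻¹' Iic a) ≤ β}
  rcases J.eq_empty_or_nonempty with hJ | hne
  · change ν (g ⁻¹' J) ≤ β
    simp [hJ]
  obtain ⟨u, hu_mono, hu_mem, hJ_sub⟩ :=
    exists_monotone_seq_mem_subset_iUnion_Iic hne (OrderTop.bddAbove J)
  calc ν (g ⁻¹' J) ≤ ν (⋃ n, g ⁻¹' Iic (u n)) := by
        rw [← preimage_iUnion]
        exact measure_mono (preimage_mono hJ_sub)
    _ = ⨆ n, ν (g ⁻¹' Iic (u n)) :=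
        Monotone.measure_iUnion fun _ _ hij => preimage_mono (Iic_subset_Iic.mpr (hu_mono hij))
    _ ≤ β := iSup_le hu_mem

theorem pValue_alert_prob_eq_of_exists_general {X : Type*} [MeasurableSpace X]
    (m : Measure X) [SigmaFinite m] (f : X → ℝ≥0∞)
    (β : ℝ≥0∞)
    (hy : ∃ y, pValue m f y = β) :
    ∫⁻ x in {x | pValue m f x ≤ β}, f x ∂m = β := by
  obtain ⟨y, rfl⟩ := hy
  have hpValue : ∀ x, pValue m f x = m.withDensity f {t | f t ≤ f x} :=
    fun x => (withDensity_apply' f _).symm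
  simp only [← withDensity_apply', hpValue]
  refine le_antisymm (measure_setOf_measure_le_le _ f _) (measure_mono fun x hx => ?_)
  exact measure_mono fun t (ht : f t ≤ f x) => ht.trans hx

/-- If some `y ∈ X` has `pv_f(y) = β`, then `P_f({x : pv_f(x) ≤ β}) = β`:
the bound `P_f({pv_f ≤ β}) ≤ β` is attained with equality. -/
theorem pValue_alert_prob_eq_of_exists {X : Type*} [MeasurableSpace X]
    (m : Measure X) [SigmaFinite m] (f : X → ℝ≥0∞) (hf : Measurable f)
    (hf1 : ∫⁻ x, f x ∂m = 1) (β : ℝ≥0∞)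
    (hy : ∃ y, pValue m f y = β) :
    ∫⁻ x in {x | pValue m f x ≤ β}, f x ∂m = β :=
  pValue_alert_prob_eq_of_exists_general m f β hy
end

section
/- For any β ≥ 0, P_f({x : pv_f(x) ≤ β}) = sup{pv_f(x) : x ∈ X, pv_f(x) ≤ β} (where the supremum of the empty set is taken to be 0). In particular, equality P_f({pv_f ≤ β}) = β holds if and only if β = sup{pv_f(x) : pv_f(x) ≤ β}. -/
open MeasureTheory ENNReal Set

/-- For any `β ≥ 0`, `P_f({x : pv_f(x) ≤ β}) = sup {pv_f(x) : pv_f(x) ≤ β}`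
(the sup of the empty set being `0`); in particular
`P_f({pv_f ≤ β}) = β` if and only if `β = sup {pv_f(x) : pv_f(x) ≤ β}`. -/
theorem pValue_alert_prob_eq_sSup {X : Type*} [MeasurableSpace X]
    (m : Measure X) [SigmaFinite m] (f : X → ℝ≥0∞) (hf : Measurable f)
    (hf1 : ∫⁻ x, f x ∂m = 1) (β : ℝ≥0∞) :
    (∫⁻ x in {x | pValue m f x ≤ β}, f x ∂m
      = sSup {p | ∃ x, pValue m f x = p ∧ p ≤ β}) ∧
    ((∫⁻ x in {x | pValue m f x ≤ β}, f x ∂m = β)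
      ↔ β = sSup {p | ∃ x, pValue m f x = p ∧ p ≤ β}) := by
  classical
  set ν := m.withDensity f with hνdef
  have hLmeas : ∀ x : X, MeasurableSet {t | f t ≤ f x} := fun x => hf measurableSet_Iic
  have hpv : ∀ x, pValue m f x = ν {t | f t ≤ f x} := fun x =>
    (withDensity_apply f (hLmeas x)).symm
  set g : ℝ≥0∞ → ℝ≥0∞ := fun c => ν {t | f t ≤ c} with hgdef
  have hgmono : Monotone g := fun a b hab => measure_mono (fun t ht => le_trans ht hab)
  have hpvg : ∀ x, pValue m f x = g (f x) := hpv
  have hpvmeas : Measurable (pValue m f) := by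
    have h := hgmono.measurable.comp hf
    convert h using 1
    exact funext hpvg
  have hAmeas : MeasurableSet {x | pValue m f x ≤ β} := hpvmeas measurableSet_Iic
  have hint : ∫⁻ x in {x | pValue m f x ≤ β}, f x ∂m = ν {x | pValue m f x ≤ β} :=
    (withDensity_apply f hAmeas).symm
  have key : ν {x | pValue m f x ≤ β} = sSup {p | ∃ x, pValue m f x = p ∧ p ≤ β} := by
    apply le_antisymm
    · rcases Set.eq_empty_or_nonempty {x | pValue m f x ≤ β} with hAe | ⟨x0, hx0⟩
      · rw [hAe]; simp
      by_cases hmax : ∃ z ∈ {x | pValue m f x ≤ β},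
          ∀ t ∈ {x | pValue m f x ≤ β}, f t ≤ f z
      · obtain ⟨z, hz, hzmax⟩ := hmax
        calc ν {x | pValue m f x ≤ β} ≤ ν {t | f t ≤ f z} :=
              measure_mono fun t ht => hzmax t ht
          _ = pValue m f z := (hpv z).symm
          _ ≤ sSup {p | ∃ x, pValue m f x = p ∧ p ≤ β} := le_sSup ⟨z, rfl, hz⟩
      · push_neg at hmax
        set T := f '' {x | pValue m f x ≤ β} with hTdef
        have hTne : T.Nonempty := ⟨f x0, x0, hx0, rfl⟩
        obtain ⟨u, hu_mono, hu_tendsto, hu_mem⟩ :=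
          exists_seq_tendsto_sSup hTne (OrderTop.bddAbove T)
        choose z hzA hzf using hu_mem
        have hsup : (⨆ n, u n) = sSup T :=
          tendsto_nhds_unique (tendsto_atTop_iSup hu_mono) hu_tendsto
        have hcover : {x | pValue m f x ≤ β} ⊆ ⋃ n, {t | f t ≤ f (z n)} := by
          intro t ht
          have h1 : f t < sSup T := by
            have hmem : f t ∈ T := ⟨t, ht, rfl⟩
            rcases lt_or_eq_of_le (le_sSup hmem) with h | h
            · exact h
            · obtain ⟨t', ht', hlt⟩ := hmax t ht
              have hmem' : f t' ∈ T := ⟨t', ht', rfl⟩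
              exact absurd (le_sSup hmem') (by rw [← h]; exact not_le.mpr hlt)
          rw [← hsup] at h1
          obtain ⟨n, hn⟩ := lt_iSup_iff.mp h1
          have hlt : f t < f (z n) := by rw [hzf n]; exact hn
          exact Set.mem_iUnion.mpr ⟨n, hlt.le⟩
        have hdir : Monotone (fun n => {t | f t ≤ f (z n)}) := by
          intro a b hab t ht
          have : f (z a) ≤ f (z b) := by rw [hzf a, hzf b]; exact hu_mono hab
          exact le_trans ht this
        calc ν {x | pValue m f x ≤ β} ≤ ν (⋃ n, {t | f t ≤ f (z n)}) :=
              measure_mono hcover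
          _ = ⨆ n, ν {t | f t ≤ f (z n)} :=
              hdir.directed_le.measure_iUnion
          _ ≤ sSup {p | ∃ x, pValue m f x = p ∧ p ≤ β} :=
              iSup_le fun n => le_sSup ⟨z n, hpv (z n), (hpv (z n)) ▸ hzA n⟩
    · apply sSup_le
      rintro p ⟨x, hx, hxβ⟩
      have hsub : {t | f t ≤ f x} ⊆ {x | pValue m f x ≤ β} := by
        intro t ht
        have h2 : pValue m f t ≤ pValue m f x := by
          rw [hpvg t, hpvg x]; exact hgmono ht
        exact le_trans h2 (hx ▸ hxβ)
      calc p = ν {t | f t ≤ f x} := by rw [← hx, hpv]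
        _ ≤ ν {x | pValue m f x ≤ β} := measure_mono hsub
  refine ⟨by rw [hint, key], ?_⟩
  rw [hint, key]
  exact eq_comm
end

section
/- If the p-value map pv_f : X → [0,1] is surjective, then P_f({x : pv_f(x) ≤ β}) = β for every β ∈ [0,1]. -/
open MeasureTheory ENNReal

/-!
With `μ = f • m` and `F a = μ {f ≤ a}`, the p-value is `F ∘ f`. Pick `x₀` with `F (f x₀) = β`.
Then `{f ≤ f x₀} ⊆ {F ∘ f ≤ β}` gives `≥ β`. Conversely `{F ∘ f ≤ β} = f⁻¹' T` with
`T = {a | F a ≤ β}`: if `s = sup T` lies in `T` this set sits inside `{f ≤ s}`, and otherwise it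
is exhausted by `{f ≤ uₙ}` for a sequence `uₙ ∈ T` increasing to `s`, so continuity from below
bounds its measure by `β`.
-/

section Sublevel

variable {X α : Type*} [MeasurableSpace X]

noncomputable def sublevelMeasure [LE α] (μ : Measure X) (g : X → α) (a : α) : ℝ≥0∞ :=
  μ {x | g x ≤ a}

variable [CompleteLinearOrder α] (μ : Measure X) (g : X → α)

theorem monotone_sublevelMeasure : Monotone (sublevelMeasure μ g) :=
  fun _ _ hab => measure_mono fun _ hx => le_trans hx hab

variable [TopologicalSpace α] [OrderTopology α] [FirstCountableTopology α]

theorem measure_preimage_le_of_forall_sublevelMeasure_le {T : Set α} {c : ℝ≥0∞}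
    (hT : ∀ a ∈ T, sublevelMeasure μ g a ≤ c) : μ (g ⁻¹' T) ≤ c := by
  rcases T.eq_empty_or_nonempty with rfl | hne
  · simp
  by_cases hsup : sSup T ∈ T
  · exact (measure_mono fun x (hx : g x ∈ T) => (le_sSup hx : g x ≤ sSup T)).trans (hT _ hsup)
  obtain ⟨u, hu_mono, hu_lim, hu_mem⟩ := exists_seq_tendsto_sSup hne (OrderTop.bddAbove T)
  have hcover : g ⁻¹' T ⊆ ⋃ n, {x | g x ≤ u n} := by
    intro x (hx : g x ∈ T)
    have hlt : g x < sSup T := (le_sSup hx).lt_of_ne fun h => hsup (h ▸ hx)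
    obtain ⟨n, hn⟩ := (hu_lim.eventually (lt_mem_nhds hlt)).exists
    exact Set.mem_iUnion.mpr ⟨n, hn.le⟩
  calc μ (g ⁻¹' T) ≤ μ (⋃ n, {x | g x ≤ u n}) := measure_mono hcover
    _ = ⨆ n, sublevelMeasure μ g (u n) :=
      Monotone.measure_iUnion fun _ _ hij _ hx => le_trans hx (hu_mono hij)
    _ ≤ c := iSup_le fun n => hT _ (hu_mem n)

theorem measure_sublevelMeasure_comp_le_sublevelMeasure (a : α) :
    μ {x | sublevelMeasure μ g (g x) ≤ sublevelMeasure μ g a} = sublevelMeasure μ g a := by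
  refine le_antisymm (measure_preimage_le_of_forall_sublevelMeasure_le μ g fun _ h => h) ?_
  exact measure_mono fun x hx => monotone_sublevelMeasure μ g hx

end Sublevel

theorem pValue_alert_prob_eq_of_surj_general {X : Type*} [MeasurableSpace X]
    (m : Measure X) (f : X → ℝ≥0∞) (hf : Measurable f)
    (hsurj : ∀ p : ℝ≥0∞, p ≤ 1 → ∃ x, pValue m f x = p) :
    ∀ β : ℝ≥0∞, β ≤ 1 → ∫⁻ x in {x | pValue m f x ≤ β}, f x ∂m = β := by
  intro β hβ
  obtain ⟨x₀, rfl⟩ := hsurj β hβ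
  have hpValue : pValue m f = fun x => sublevelMeasure (m.withDensity f) f (f x) := by
    ext x
    exact (withDensity_apply f (measurableSet_le hf measurable_const)).symm
  have hmeas : MeasurableSet {x | pValue m f x ≤ pValue m f x₀} := by
    rw [hpValue]
    exact measurableSet_le ((monotone_sublevelMeasure _ f).measurable.comp hf) measurable_const
  rw [← withDensity_apply f hmeas, hpValue]
  exact measure_sublevelMeasure_comp_le_sublevelMeasure _ f (f x₀)

/-- If the p-value map `pv_f : X → [0,1]` is surjective, then
`P_f({x : pv_f(x) ≤ β}) = β` for every `β ∈ [0,1]`. -/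
theorem pValue_alert_prob_eq_of_surj {X : Type*} [MeasurableSpace X]
    (m : Measure X) [SigmaFinite m] (f : X → ℝ≥0∞) (hf : Measurable f)
    (hf1 : ∫⁻ x, f x ∂m = 1)
    (hsurj : ∀ p : ℝ≥0∞, p ≤ 1 → ∃ x, pValue m f x = p) :
    ∀ β : ℝ≥0∞, β ≤ 1 → ∫⁻ x in {x | pValue m f x ≤ β}, f x ∂m = β :=
  pValue_alert_prob_eq_of_surj_general m f hf hsurj
end

section
/- If the density f has no plateaus on sets of positive measure, i.e., m({x : f(x) = y}) = 0 for every y > 0, then P_f({x : pv_f(x) ≤ β}) = β for every β in the closure of the range of pv_f; in particular the alert-rate bound of the regulation theorem holds with equality. -/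
/-!
Push `P_f` forward along `f` to a probability measure `μ` on `[0, ∞]`. It has no atoms, since
`P_f {f = y} = y * m {f = y} = 0`, and `pv_f = G ∘ f` for its distribution function
`G y = μ [0, y]`. An atomless distribution function is continuous, so `G` attains every
`β ∈ [0, 1]` and the closed lower set `{G ≤ β}` is an interval `[0, c]` with `G c = β`.
Hence `{pv_f ≤ β} = {f ≤ c}`, whose `P_f`-mass is `G c = β`.
-/

open MeasureTheory ENNReal

open Filter Topology Set

section DistributionFunction

variable {α : Type*} [LinearOrder α] [TopologicalSpace α] [OrderTopology α]
  [FirstCountableTopology α] [DenselyOrdered α] [MeasurableSpace α] [OpensMeasurableSpace α]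
  (μ : Measure α) [IsFiniteMeasure μ]

theorem tendsto_measure_Iic_nhdsGT (a : α) :
    Tendsto (fun y ↦ μ (Iic y)) (𝓝[>] a) (𝓝 (μ (Iic a))) := by
  rcases (Ioi a).eq_empty_or_nonempty with h | ⟨r, hr⟩
  · simp [h]
  have hinter : ⋂ r > a, Iic r = Iic a := by
    ext x
    simp only [mem_iInter, mem_Iic]
    exact ⟨fun h ↦ le_of_forall_gt_imp_ge_of_dense h, fun hx r hr ↦ hx.trans hr.le⟩
  rw [← hinter]
  exact tendsto_measure_biInter_gt (fun r _ ↦ measurableSet_Iic.nullMeasurableSet)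
    (fun i j _ hij ↦ Iic_subset_Iic.2 hij) ⟨r, hr, measure_ne_top μ _⟩

theorem continuous_measure_Iic [NullSingletonClass μ] : Continuous fun y ↦ μ (Iic y) := by
  refine continuous_iff_continuousAt.2 fun a ↦
    continuousAt_iff_continuous_left'_right'.2 ⟨?_, tendsto_measure_Iic_nhdsGT μ a⟩
  have hcompl : ∀ y, μ (Iic y) = μ univ - μ (Ici y) := fun y ↦ by
    rw [← measure_congr (Ioi_ae_eq_Ici' (measure_singleton y)), ← compl_Iic,
      measure_compl measurableSet_Iic (measure_ne_top μ _),
      ENNReal.sub_sub_cancel (measure_ne_top μ _) (measure_mono (subset_univ _))]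
  have : IsFiniteMeasure (α := αᵒᵈ) μ := ‹IsFiniteMeasure μ›
  have hleft : Tendsto (fun y ↦ μ (Ici y)) (𝓝[<] a) (𝓝 (μ (Ici a))) :=
    tendsto_measure_Iic_nhdsGT (α := αᵒᵈ) μ (OrderDual.toDual a)
  -- left continuity is right continuity on the order dual, after passing to complements
  simp only [ContinuousWithinAt, hcompl]
  exact ENNReal.Tendsto.sub tendsto_const_nhds hleft (.inl (measure_ne_top μ _))

end DistributionFunction

theorem Monotone.exists_apply_eq_and_setOf_le_eq_Iic {α β : Type*} [CompleteLinearOrder α]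
    [TopologicalSpace α] [OrderTopology α] [PreconnectedSpace α] [LinearOrder β] [TopologicalSpace β]
    [OrderClosedTopology β] {G : α → β} (hG : Continuous G) (hGm : Monotone G) {b : β}
    (hb₀ : G ⊥ ≤ b) (hb₁ : b ≤ G ⊤) : ∃ c, G c = b ∧ {y | G y ≤ b} = Iic c := by
  obtain ⟨c₀, hc₀⟩ := intermediate_value_univ ⊥ ⊤ hG ⟨hb₀, hb₁⟩
  have hclosed : IsClosed {y | G y ≤ b} := isClosed_le hG continuous_const
  have hmem : sSup {y | G y ≤ b} ∈ {y | G y ≤ b} := hclosed.sSup_mem ⟨c₀, hc₀.le⟩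
  refine ⟨sSup {y | G y ≤ b}, le_antisymm hmem (hc₀.symm.le.trans (hGm (le_sSup hc₀.le))), ?_⟩
  ext y
  exact ⟨fun hy ↦ le_sSup hy, fun hy ↦ (hGm hy).trans hmem⟩

section PValue

variable {X : Type*} [MeasurableSpace X] {m : Measure X} {f : X → ℝ≥0∞}

theorem pValue_eq_map_withDensity_Iic (hf : Measurable f) (x : X) :
    pValue m f x = (m.withDensity f).map f (Iic (f x)) := by
  rw [Measure.map_apply hf measurableSet_Iic, withDensity_apply _ (hf measurableSet_Iic)]
  rfl

theorem nullSingletonClass_map_withDensity_self (hf : Measurable f)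
    (hlevel : ∀ y, 0 < y → m (f ⁻¹' {y}) = 0) :
    NullSingletonClass ((m.withDensity f).map f) := by
  refine ⟨fun y ↦ ?_⟩
  have hy : MeasurableSet (f ⁻¹' {y}) := hf (measurableSet_singleton y)
  rw [Measure.map_apply hf (measurableSet_singleton y), withDensity_apply _ hy,
    setLIntegral_congr_fun hy fun x hx ↦ hx, setLIntegral_const]
  rcases eq_zero_or_pos y with rfl | hpos
  · exact zero_mul _
  · rw [hlevel y hpos, mul_zero]

end PValue

theorem pValue_alert_prob_eq_of_no_plateau_general {X : Type*} [MeasurableSpace X]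
    (m : Measure X) (f : X → ℝ≥0∞) (hf : Measurable f)
    (hf1 : ∫⁻ x, f x ∂m = 1)
    (hlevel : ∀ y : ℝ≥0∞, 0 < y → m {x | f x = y} = 0) :
    ∀ β ∈ closure (Set.range (pValue m f)),
      ∫⁻ x in {x | pValue m f x ≤ β}, f x ∂m = β := by
  intro β hβ
  have : IsProbabilityMeasure (m.withDensity f) :=
    ⟨by rw [withDensity_apply _ MeasurableSet.univ, Measure.restrict_univ, hf1]⟩
  set μ := (m.withDensity f).map f
  have : IsProbabilityMeasure μ := Measure.isProbabilityMeasure_map hf.aemeasurable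
  have : NullSingletonClass μ := nullSingletonClass_map_withDensity_self hf hlevel
  have hpv : pValue m f = fun x ↦ μ (Iic (f x)) := funext (pValue_eq_map_withDensity_Iic hf)
  have hβ₁ : β ≤ μ (Iic ⊤) := by
    rw [Iic_top, measure_univ]
    refine closure_minimal (range_subset_iff.2 fun x ↦ ?_) isClosed_Iic hβ
    rw [hpv]
    exact prob_le_one
  have hβ₀ : μ (Iic ⊥) ≤ β := by rw [Iic_bot, measure_singleton]; exact zero_le
  obtain ⟨c, hc, hset⟩ := Monotone.exists_apply_eq_and_setOf_le_eq_Iic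
    (continuous_measure_Iic μ) (fun _ _ h ↦ measure_mono (Iic_subset_Iic.2 h)) hβ₀ hβ₁
  rw [hpv]
  change ∫⁻ x in f ⁻¹' {y | μ (Iic y) ≤ β}, f x ∂m = β
  rw [hset, ← withDensity_apply _ (hf measurableSet_Iic),
    ← Measure.map_apply hf measurableSet_Iic, hc]

/-- If the density `f` has no plateaus of positive measure, i.e.
`m({x : f(x) = y}) = 0` for every `y > 0`, then `P_f({x : pv_f(x) ≤ β}) = β`
for every `β` in the closure of the range of `pv_f`; in particular the
alert-rate bound holds with equality. -/
theorem pValue_alert_prob_eq_of_no_plateau {X : Type*} [MeasurableSpace X]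
    (m : Measure X) [SigmaFinite m] (f : X → ℝ≥0∞) (hf : Measurable f)
    (hf1 : ∫⁻ x, f x ∂m = 1)
    (hlevel : ∀ y : ℝ≥0∞, 0 < y → m {x | f x = y} = 0) :
    ∀ β ∈ closure (Set.range (pValue m f)),
      ∫⁻ x in {x | pValue m f x ≤ β}, f x ∂m = β :=
  pValue_alert_prob_eq_of_no_plateau_general m f hf hf1 hlevel
end
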